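/- For every modal formula φ and every set τ of proposition letters, there exists a modal formula θ with sig(θ) ⊆ sig(φ) ∩ τ such that φ → θ is valid and, for every modal formula ψ with sig(ψ) ⊆ τ such that φ → ψ is valid, θ → ψ is valid. (Uniform interpolation for the modal logic K: the interpolant depends only on the antecedent and the shared signature.) -/

import Mathlib

inductive ModalFormula (α : Type) : Type
  | atom : α → ModalFormula α
  | top  : ModalFormula α
  | bot  : ModalFormula α
  | neg  : ModalFormula α → ModalFormula α
  | or   : ModalFormula α → ModalFormula α → ModalFormula α
  | and  : ModalFormula α → ModalFormula α → ModalFormula α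
  | dia  : ModalFormula α → ModalFormula α
  | box  : ModalFormula α → ModalFormula α

structure KripkeModel (α : Type) where
  World : Type
  R : World → World → Prop
  V : α → Set World

def Satisfies {α : Type} (M : KripkeModel α) : M.World → ModalFormula α → Prop
  | w, .atom p  => w ∈ M.V p
  | _, .top     => True
  | _, .bot     => False
  | w, .neg φ   => ¬ Satisfies M w φ
  | w, .or φ ψ  => Satisfies M w φ ∨ Satisfies M w ψ
  | w, .and φ ψ => Satisfies M w φ ∧ Satisfies M w ψ
  | w, .dia φ   => ∃ v, M.R w v ∧ Satisfies M v φ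
  | w, .box φ   => ∀ v, M.R w v → Satisfies M v φ

def Valid {α : Type} (φ : ModalFormula α) : Prop :=
  ∀ (M : KripkeModel α) (w : M.World), Satisfies M w φ

def ModalFormula.impl {α : Type} (φ ψ : ModalFormula α) : ModalFormula α :=
  .or (.neg φ) ψ

def sig {α : Type} : ModalFormula α → Set α
  | .atom p  => {p}
  | .top     => ∅
  | .bot     => ∅
  | .neg φ   => sig φ
  | .or φ ψ  => sig φ ∪ sig ψ
  | .and φ ψ => sig φ ∪ sig ψ
  | .dia φ   => sig φ
  | .box φ   => sig φ

def IsBisimulation {α : Type} (τ : Set α) (M M' : KripkeModel α)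
    (Z : M.World → M'.World → Prop) : Prop :=
  ∀ w w', Z w w' →
    (∀ p ∈ τ, (w ∈ M.V p ↔ w' ∈ M'.V p)) ∧
    (∀ v, M.R w v → ∃ v', M'.R w' v' ∧ Z v v') ∧
    (∀ v', M'.R w' v' → ∃ v, M.R w v ∧ Z v v')

def Bisimilar {α : Type} (τ : Set α) (M : KripkeModel α) (w : M.World)
    (M' : KripkeModel α) (w' : M'.World) : Prop :=
  ∃ Z, IsBisimulation τ M M' Z ∧ Z w w'

/-!
Let `s = sig φ ∩ τ` and `n` be the modal depth of `φ`. There are finitely many depth-`n` Hintikka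
formulas over `s`, and each determines a world up to `n`-bisimilarity on `s`. The interpolant `θ`
is the disjunction of those realised at models of `φ`, so `φ → θ` is valid. If `w ⊨ θ`, then `w`
has the Hintikka formula of some `w' ⊨ φ`. Amalgamating the two models yields a world that is
`τ`-bisimilar to `w` and, reading the atoms outside `τ` as `w'` does, still satisfies `φ`. It
therefore satisfies every `ψ` over `τ` implied by `φ`, and by bisimulation invariance so does `w`.
-/

open scoped Classical

variable {α : Type}

namespace ModalFormula

def conj : List (ModalFormula α) → ModalFormula α
  | [] => top
  | χ :: l => .and χ (conj l)

def disj : List (ModalFormula α) → ModalFormula α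
  | [] => bot
  | χ :: l => .or χ (disj l)

def depth : ModalFormula α → ℕ
  | atom _ | top | bot => 0
  | neg χ => depth χ
  | .or χ ρ | .and χ ρ => max (depth χ) (depth ρ)
  | dia χ | box χ => depth χ + 1

theorem sig_finite (χ : ModalFormula α) : (sig χ).Finite := by
  induction χ <;> simp [sig, *]

theorem sig_conj_subset {l : List (ModalFormula α)} {t : Set α} (h : ∀ χ ∈ l, sig χ ⊆ t) :
    sig (conj l) ⊆ t := by
  induction l <;> simp_all [conj, sig]

theorem sig_disj_subset {l : List (ModalFormula α)} {t : Set α} (h : ∀ χ ∈ l, sig χ ⊆ t) :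
    sig (disj l) ⊆ t := by
  induction l <;> simp_all [disj, sig]

end ModalFormula

open ModalFormula

section Semantics

variable {M : KripkeModel α} {w : M.World}

theorem satisfies_conj {l : List (ModalFormula α)} :
    Satisfies M w (conj l) ↔ ∀ χ ∈ l, Satisfies M w χ := by
  induction l <;> simp [conj, Satisfies, *]

theorem satisfies_disj {l : List (ModalFormula α)} :
    Satisfies M w (disj l) ↔ ∃ χ ∈ l, Satisfies M w χ := by
  induction l <;> simp [disj, Satisfies, *]

theorem valid_impl_iff {φ ψ : ModalFormula α} :
    Valid (φ.impl ψ) ↔ ∀ (M : KripkeModel α) (w : M.World), Satisfies M w φ → Satisfies M w ψ := by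
  simp only [Valid, impl, Satisfies, imp_iff_not_or]

end Semantics

theorem IsBisimulation.satisfies_iff {τ : Set α} {M M' : KripkeModel α}
    {Z : M.World → M'.World → Prop} (hZ : IsBisimulation τ M M' Z) {χ : ModalFormula α}
    (hχ : sig χ ⊆ τ) {w : M.World} {w' : M'.World} (hw : Z w w') :
    Satisfies M w χ ↔ Satisfies M' w' χ := by
  induction χ generalizing w w' with
  | atom p => exact (hZ w w' hw).1 p (hχ rfl)
  | top | bot => exact Iff.rfl
  | neg χ ih => exact not_congr (ih hχ hw)
  | or χ ρ ihχ ihρ =>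
    obtain ⟨hχ, hρ⟩ := Set.union_subset_iff.1 hχ
    exact or_congr (ihχ hχ hw) (ihρ hρ hw)
  | and χ ρ ihχ ihρ =>
    obtain ⟨hχ, hρ⟩ := Set.union_subset_iff.1 hχ
    exact and_congr (ihχ hχ hw) (ihρ hρ hw)
  | dia χ ih =>
    constructor
    · rintro ⟨v, hv, hsat⟩
      obtain ⟨v', hv', hvv'⟩ := (hZ w w' hw).2.1 v hv
      exact ⟨v', hv', (ih hχ hvv').1 hsat⟩
    · rintro ⟨v', hv', hsat⟩
      obtain ⟨v, hv, hvv'⟩ := (hZ w w' hw).2.2 v' hv'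
      exact ⟨v, hv, (ih hχ hvv').2 hsat⟩
  | box χ ih =>
    constructor
    · intro hsat v' hv'
      obtain ⟨v, hv, hvv'⟩ := (hZ w w' hw).2.2 v' hv'
      exact (ih hχ hvv').1 (hsat v hv)
    · intro hsat v hv
      obtain ⟨v', hv', hvv'⟩ := (hZ w w' hw).2.1 v hv
      exact (ih hχ hvv').2 (hsat v' hv')

theorem Bisimilar.satisfies_iff {τ : Set α} {M M' : KripkeModel α} {w : M.World}
    {w' : M'.World} (h : Bisimilar τ M w M' w') {χ : ModalFormula α} (hχ : sig χ ⊆ τ) :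
    Satisfies M w χ ↔ Satisfies M' w' χ :=
  let ⟨_, hZ, hw⟩ := h
  hZ.satisfies_iff hχ hw

namespace ModalFormula

variable (s : Finset α)

noncomputable def literals (A : Finset α) : ModalFormula α :=
  conj (s.toList.map fun p => if p ∈ A then atom p else neg (atom p))

noncomputable def hintikkaStep (A : Finset α) (T : Finset (ModalFormula α)) : ModalFormula α :=
  .and (literals s A) (.and (conj (T.toList.map dia)) (box (disj T.toList)))

noncomputable def hintikkaSet : ℕ → Finset (ModalFormula α)
  | 0 => s.powerset.image (literals s)
  | n + 1 => (s.powerset ×ˢ (hintikkaSet n).powerset).image fun AT => hintikkaStep s AT.1 AT.2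

theorem sig_literals_subset (A : Finset α) : sig (literals s A) ⊆ s := by
  refine sig_conj_subset ?_
  simp only [List.mem_map, Finset.mem_toList]
  rintro _ ⟨p, hp, rfl⟩
  split_ifs <;> simpa [sig] using hp

theorem sig_subset_of_mem_hintikkaSet {n : ℕ} {χ : ModalFormula α} (hχ : χ ∈ hintikkaSet s n) :
    sig χ ⊆ s := by
  induction n generalizing χ with
  | zero =>
    obtain ⟨A, -, rfl⟩ := Finset.mem_image.1 hχ
    exact sig_literals_subset s A
  | succ n ih =>
    obtain ⟨⟨A, T⟩, hAT, rfl⟩ := Finset.mem_image.1 hχ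
    have hT : ∀ χ ∈ T.toList, sig χ ⊆ s := fun χ hχ =>
      ih (Finset.mem_powerset.1 (Finset.mem_product.1 hAT).2 (Finset.mem_toList.1 hχ))
    refine Set.union_subset (sig_literals_subset s A) (Set.union_subset ?_ (sig_disj_subset hT))
    refine sig_conj_subset ?_
    simp only [List.mem_map]
    rintro _ ⟨χ, hχ, rfl⟩
    exact hT χ hχ

end ModalFormula

section Hintikka

variable (s : Finset α) (M : KripkeModel α)

/-- Characterises `w` up to `n`-bisimilarity on the atoms `s`. -/
noncomputable def hintikka : ℕ → M.World → ModalFormula α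
  | 0, w => literals s {p ∈ s | w ∈ M.V p}
  | n + 1, w => hintikkaStep s {p ∈ s | w ∈ M.V p}
      {χ ∈ hintikkaSet s n | ∃ v, M.R w v ∧ hintikka n v = χ}

variable {s M}

theorem satisfies_literals {w : M.World} {A : Finset α} :
    Satisfies M w (literals s A) ↔ ∀ p ∈ s, (w ∈ M.V p ↔ p ∈ A) := by
  simp only [literals, satisfies_conj, List.forall_mem_map, Finset.mem_toList]
  refine forall₂_congr fun p _ => ?_
  split_ifs with h <;> simp [Satisfies, h]

theorem satisfies_literals_filter {M' : KripkeModel α} {w : M.World} {w' : M'.World} :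
    Satisfies M' w' (literals s {p ∈ s | w ∈ M.V p}) ↔ ∀ p ∈ s, (w' ∈ M'.V p ↔ w ∈ M.V p) := by
  rw [satisfies_literals]
  refine forall₂_congr fun p hp => ?_
  simp [hp]

theorem filter_mem_V_eq {w : M.World} {A : Finset α} (hA : A ⊆ s)
    (h : Satisfies M w (literals s A)) : {p ∈ s | w ∈ M.V p} = A := by
  ext p
  by_cases hp : p ∈ s
  · simp [hp, satisfies_literals.1 h p hp]
  · simp only [Finset.mem_filter, hp, false_and, false_iff]
    exact fun h => hp (hA h)

theorem satisfies_hintikkaStep {w : M.World} {A : Finset α} {T : Finset (ModalFormula α)} :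
    Satisfies M w (hintikkaStep s A T) ↔ Satisfies M w (literals s A) ∧
      (∀ χ ∈ T, ∃ v, M.R w v ∧ Satisfies M v χ) ∧ ∀ v, M.R w v → ∃ χ ∈ T, Satisfies M v χ := by
  simp [hintikkaStep, Satisfies, satisfies_conj, satisfies_disj]

theorem hintikka_mem_hintikkaSet (n : ℕ) (w : M.World) : hintikka s M n w ∈ hintikkaSet s n := by
  cases n with
  | zero =>
    rw [hintikka, hintikkaSet]
    exact Finset.mem_image_of_mem _ (Finset.mem_powerset.2 (Finset.filter_subset _ _))
  | succ n =>
    rw [hintikka, hintikkaSet]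
    refine Finset.mem_image.2 ⟨(_, _), Finset.mem_product.2 ⟨?_, ?_⟩, rfl⟩ <;>
      exact Finset.mem_powerset.2 (Finset.filter_subset _ _)

theorem satisfies_hintikka (n : ℕ) (w : M.World) : Satisfies M w (hintikka s M n w) := by
  induction n generalizing w with
  | zero => exact satisfies_literals_filter.2 fun _ _ => Iff.rfl
  | succ n ih =>
    refine satisfies_hintikkaStep.2 ⟨satisfies_literals_filter.2 fun _ _ => Iff.rfl, ?_, ?_⟩
    · intro χ hχ
      obtain ⟨-, v, hv, rfl⟩ := Finset.mem_filter.1 hχ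
      exact ⟨v, hv, ih v⟩
    · intro v hv
      exact ⟨hintikka s M n v, Finset.mem_filter.2 ⟨hintikka_mem_hintikkaSet n v, v, hv, rfl⟩, ih v⟩

theorem hintikka_eq_of_satisfies {n : ℕ} {w : M.World} {χ : ModalFormula α}
    (hχ : χ ∈ hintikkaSet s n) (hw : Satisfies M w χ) : hintikka s M n w = χ := by
  induction n generalizing w χ with
  | zero =>
    obtain ⟨A, hA, rfl⟩ := Finset.mem_image.1 hχ
    rw [hintikka, filter_mem_V_eq (Finset.mem_powerset.1 hA) hw]
  | succ n ih =>
    obtain ⟨⟨A, T⟩, hAT, rfl⟩ := Finset.mem_image.1 hχ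
    obtain ⟨hA, hT⟩ := Finset.mem_product.1 hAT
    replace hT := Finset.mem_powerset.1 hT
    obtain ⟨hlit, hdia, hbox⟩ := satisfies_hintikkaStep.1 hw
    have hsucc : {χ ∈ hintikkaSet s n | ∃ v, M.R w v ∧ hintikka s M n v = χ} = T := by
      ext χ
      rw [Finset.mem_filter]
      constructor
      · rintro ⟨-, v, hv, rfl⟩
        obtain ⟨χ, hχ, hvχ⟩ := hbox v hv
        rwa [ih (hT hχ) hvχ]
      · intro hχ
        obtain ⟨v, hv, hvχ⟩ := hdia χ hχ
        exact ⟨hT hχ, v, hv, ih (hT hχ) hvχ⟩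
    rw [hintikka, filter_mem_V_eq (Finset.mem_powerset.1 hA) hlit, hsucc]

variable {M' : KripkeModel α} {n : ℕ} {v : M.World} {v' : M'.World}

theorem mem_V_iff_of_hintikka_eq (h : hintikka s M n v = hintikka s M' n v') {p : α}
    (hp : p ∈ s) : v ∈ M.V p ↔ v' ∈ M'.V p := by
  have hv' := satisfies_hintikka (s := s) n v'
  rw [← h] at hv'
  cases n with
  | zero => exact (satisfies_literals_filter.1 hv' p hp).symm
  | succ n => exact (satisfies_literals_filter.1 (satisfies_hintikkaStep.1 hv').1 p hp).symm

theorem exists_hintikka_eq_of_hintikka_succ_eq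
    (h : hintikka s M (n + 1) v = hintikka s M' (n + 1) v')
    {u : M.World} (hu : M.R v u) : ∃ u', M'.R v' u' ∧ hintikka s M n u = hintikka s M' n u' := by
  have hv' := satisfies_hintikka (s := s) (n + 1) v'
  rw [← h, hintikka] at hv'
  obtain ⟨u', hu', hsat⟩ := (satisfies_hintikkaStep.1 hv').2.1 (hintikka s M n u)
    (Finset.mem_filter.2 ⟨hintikka_mem_hintikkaSet n u, u, hu, rfl⟩)
  exact ⟨u', hu', (hintikka_eq_of_satisfies (hintikka_mem_hintikkaSet n u) hsat).symm⟩

end Hintikka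

namespace KripkeModel

/-- Above a triple `(v, v', d)` whose components have equal depth-`d` Hintikka formulas, atoms of
`τ` are read in `M` and all others in `M'`; successors are triples of successors with equal
depth-`(d - 1)` formulas, and the successors of a triple at depth `0` are taken in a copy of `M`. -/
noncomputable def amalgam (s : Finset α) (τ : Set α) (M M' : KripkeModel α) : KripkeModel α where
  World := M.World ⊕ (M.World × M'.World × ℕ)
  R
    | .inl v, .inl u => M.R v u
    | .inr (v, v', d), .inr (u, u', e) =>
      d = e + 1 ∧ M.R v u ∧ M'.R v' u' ∧ hintikka s M e u = hintikka s M' e u'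
    | .inr (v, _, d), .inl u => d = 0 ∧ M.R v u
    | .inl _, .inr _ => False
  V p := Sum.elim (M.V p) fun (v, v', _) => if p ∈ τ then v ∈ M.V p else v' ∈ M'.V p

variable {s : Finset α} {τ : Set α} {M M' : KripkeModel α} {v : M.World} {v' : M'.World}
  {x : (amalgam s τ M M').World}

theorem mem_amalgam_V_inr {p : α} {d : ℕ} : Sum.inr (v, v', d) ∈ (amalgam s τ M M').V p ↔
    if p ∈ τ then v ∈ M.V p else v' ∈ M'.V p :=
  Iff.rfl

theorem amalgam_R_inl : (amalgam s τ M M').R (Sum.inl v) x ↔ ∃ u, x = Sum.inl u ∧ M.R v u := by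
  cases x <;> simp [amalgam]

theorem amalgam_R_inr_zero :
    (amalgam s τ M M').R (Sum.inr (v, v', 0)) x ↔ ∃ u, x = Sum.inl u ∧ M.R v u := by
  cases x <;> simp [amalgam]

theorem amalgam_R_inr_succ {e : ℕ} : (amalgam s τ M M').R (Sum.inr (v, v', e + 1)) x ↔
    ∃ u u', x = Sum.inr (u, u', e) ∧ M.R v u ∧ M'.R v' u' ∧
      hintikka s M e u = hintikka s M' e u' := by
  rcases x with u | ⟨u, u', d⟩
  · simp [amalgam]
  · simp [amalgam, and_comm (a := _ = d), eq_comm]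
    rintro rfl - -
    rfl

theorem isBisimulation_amalgam : IsBisimulation τ M (amalgam s τ M M') fun w x =>
    x = Sum.inl w ∨ ∃ v' d, x = Sum.inr (w, v', d) ∧ hintikka s M d w = hintikka s M' d v' := by
  rintro w _ (rfl | ⟨v', d, rfl, h⟩)
  · refine ⟨fun p _ => Iff.rfl, fun u hu => ⟨Sum.inl u, amalgam_R_inl.2 ⟨u, rfl, hu⟩, .inl rfl⟩, ?_⟩
    intro x hx
    obtain ⟨u, rfl, hu⟩ := amalgam_R_inl.1 hx
    exact ⟨u, hu, .inl rfl⟩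
  have hV : ∀ p ∈ τ, (w ∈ M.V p ↔ Sum.inr (w, v', d) ∈ (amalgam s τ M M').V p) := fun p hp => by
    rw [mem_amalgam_V_inr, if_pos hp]
  cases d with
  | zero =>
    refine ⟨hV, fun u hu => ⟨Sum.inl u, amalgam_R_inr_zero.2 ⟨u, rfl, hu⟩, .inl rfl⟩, ?_⟩
    intro x hx
    obtain ⟨u, rfl, hu⟩ := amalgam_R_inr_zero.1 hx
    exact ⟨u, hu, .inl rfl⟩
  | succ e =>
    refine ⟨hV, fun u hu => ?_, fun x hx => ?_⟩
    · obtain ⟨u', hu', he⟩ := exists_hintikka_eq_of_hintikka_succ_eq h hu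
      exact ⟨Sum.inr (u, u', e), amalgam_R_inr_succ.2 ⟨u, u', rfl, hu, hu', he⟩,
        .inr ⟨u', e, rfl, he⟩⟩
    · obtain ⟨u, u', rfl, hu, -, he⟩ := amalgam_R_inr_succ.1 hx
      exact ⟨u, hu, .inr ⟨u', e, rfl, he⟩⟩

theorem satisfies_amalgam_iff {χ : ModalFormula α} (hχ : sig χ ∩ τ ⊆ s) {d : ℕ}
    (hd : χ.depth ≤ d) (h : hintikka s M d v = hintikka s M' d v') :
    Satisfies (amalgam s τ M M') (Sum.inr (v, v', d)) χ ↔ Satisfies M' v' χ := by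
  induction χ generalizing d v v' with
  | atom p =>
    refine mem_amalgam_V_inr.trans ?_
    split_ifs with hp
    · exact mem_V_iff_of_hintikka_eq h (hχ ⟨rfl, hp⟩)
    · exact Iff.rfl
  | top | bot => exact Iff.rfl
  | neg χ ih => exact not_congr (ih hχ hd h)
  | or χ ρ ihχ ihρ =>
    rw [sig, Set.union_inter_distrib_right, Set.union_subset_iff] at hχ
    rw [depth, max_le_iff] at hd
    exact or_congr (ihχ hχ.1 hd.1 h) (ihρ hχ.2 hd.2 h)
  | and χ ρ ihχ ihρ =>
    rw [sig, Set.union_inter_distrib_right, Set.union_subset_iff] at hχ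
    rw [depth, max_le_iff] at hd
    exact and_congr (ihχ hχ.1 hd.1 h) (ihρ hχ.2 hd.2 h)
  | dia χ ih =>
    obtain ⟨e, rfl⟩ : ∃ e, d = e + 1 := ⟨d - 1, by rw [depth] at hd; omega⟩
    replace hd : χ.depth ≤ e := by rwa [depth, Nat.add_le_add_iff_right] at hd
    simp only [Satisfies, amalgam_R_inr_succ]
    constructor
    · rintro ⟨_, ⟨u, u', rfl, -, hu', he⟩, hsat⟩
      exact ⟨u', hu', (ih hχ hd he).1 hsat⟩
    · rintro ⟨u', hu', hsat⟩
      obtain ⟨u, hu, he⟩ := exists_hintikka_eq_of_hintikka_succ_eq h.symm hu'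
      exact ⟨_, ⟨u, u', rfl, hu, hu', he.symm⟩, (ih hχ hd he.symm).2 hsat⟩
  | box χ ih =>
    obtain ⟨e, rfl⟩ : ∃ e, d = e + 1 := ⟨d - 1, by rw [depth] at hd; omega⟩
    replace hd : χ.depth ≤ e := by rwa [depth, Nat.add_le_add_iff_right] at hd
    simp only [Satisfies, amalgam_R_inr_succ]
    constructor
    · intro hsat u' hu'
      obtain ⟨u, hu, he⟩ := exists_hintikka_eq_of_hintikka_succ_eq h.symm hu'
      exact (ih hχ hd he.symm).1 (hsat _ ⟨u, u', rfl, hu, hu', he.symm⟩)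
    · rintro hsat _ ⟨u, u', rfl, -, hu', he⟩
      exact (ih hχ hd he).2 (hsat u' hu')

end KripkeModel

theorem exists_bisimilar_satisfies_of_hintikka_eq {s : Finset α} (τ : Set α)
    {M M' : KripkeModel α} {n : ℕ} {v : M.World} {v' : M'.World}
    (h : hintikka s M n v = hintikka s M' n v') :
    ∃ (N : KripkeModel α) (x : N.World), Bisimilar τ M v N x ∧
      ∀ χ : ModalFormula α, χ.depth ≤ n → sig χ ∩ τ ⊆ s → Satisfies M' v' χ → Satisfies N x χ :=
  ⟨_, _, ⟨_, KripkeModel.isBisimulation_amalgam, .inr ⟨v', n, rfl, h⟩⟩,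
    fun _ hd hχ => (KripkeModel.satisfies_amalgam_iff hχ hd h).2⟩

namespace ModalFormula

noncomputable def uniformInterpolant (s : Finset α) (φ : ModalFormula α) : ModalFormula α :=
  disj ({χ ∈ hintikkaSet s φ.depth | ∃ (M : KripkeModel α) (w : M.World),
    Satisfies M w φ ∧ hintikka s M φ.depth w = χ}).toList

variable {s : Finset α} {φ : ModalFormula α}

theorem sig_uniformInterpolant_subset : sig (uniformInterpolant s φ) ⊆ s :=
  sig_disj_subset fun _ hχ =>
    sig_subset_of_mem_hintikkaSet s (Finset.mem_filter.1 (Finset.mem_toList.1 hχ)).1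

theorem satisfies_uniformInterpolant {M : KripkeModel α} {w : M.World} (hw : Satisfies M w φ) :
    Satisfies M w (uniformInterpolant s φ) :=
  satisfies_disj.2 ⟨_, Finset.mem_toList.2 (Finset.mem_filter.2
    ⟨hintikka_mem_hintikkaSet _ w, M, w, hw, rfl⟩), satisfies_hintikka _ w⟩

theorem satisfies_of_satisfies_uniformInterpolant {τ : Set α} (hs : sig φ ∩ τ ⊆ s)
    {ψ : ModalFormula α} (hψ : sig ψ ⊆ τ)
    (hφψ : ∀ (N : KripkeModel α) (x : N.World), Satisfies N x φ → Satisfies N x ψ)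
    {M : KripkeModel α} {w : M.World} (hw : Satisfies M w (uniformInterpolant s φ)) :
    Satisfies M w ψ := by
  obtain ⟨_, hχ, hwχ⟩ := satisfies_disj.1 hw
  obtain ⟨hχ, M', w', hw'φ, rfl⟩ := Finset.mem_filter.1 (Finset.mem_toList.1 hχ)
  obtain ⟨N, x, hbisim, hagree⟩ :=
    exists_bisimilar_satisfies_of_hintikka_eq τ (hintikka_eq_of_satisfies hχ hwχ)
  exact (hbisim.satisfies_iff hψ).2 (hφψ N x (hagree φ le_rfl hs hw'φ))

end ModalFormula

/-- Uniform interpolation for the modal logic K. -/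
theorem uniform_interpolation_K {α : Type} (φ : ModalFormula α) (τ : Set α) :
    ∃ θ : ModalFormula α,
      sig θ ⊆ sig φ ∩ τ ∧ Valid (φ.impl θ) ∧
      ∀ ψ : ModalFormula α, sig ψ ⊆ τ → Valid (φ.impl ψ) → Valid (θ.impl ψ) := by
  obtain ⟨s, hs⟩ := ((sig_finite φ).inter_of_left τ).exists_finset_coe
  refine ⟨uniformInterpolant s φ, ?_, ?_, ?_⟩
  · exact sig_uniformInterpolant_subset.trans hs.subset
  · exact valid_impl_iff.2 fun _ _ => satisfies_uniformInterpolant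
  · intro ψ hψ hφψ
    exact valid_impl_iff.2 fun _ _ =>
      satisfies_of_satisfies_uniformInterpolant hs.ge hψ (valid_impl_iff.1 hφψ)
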